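/- arXiv:2301.00839 — 12 statements merged into one kernel-verified Lean document; each statement's English description precedes it below -/
import Mathlib

section
/- Let x, y, z : ℝ → ℝ be twice differentiable and satisfy x'' = -k₁ x + 2k₂/x³, y'' = -4k₁ y - k₃, z'' = -F'(z), i.e. the equations of motion for the potential V = (k₁/2)(x² + 4y²) + k₂/x² + k₃ y + F(z) (assuming x(t) ≠ 0 for all t). Then the quantity I(t) = M₃ x' + k₁ y x² - 2k₂ y/x² + (k₃/2) x², where M₃ = x y' - y x', is constant in t. -/
theorem stmt_1 (k₁ k₂ k₃ : ℝ) (F : ℝ → ℝ) (hF : Differentiable ℝ F)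
    (x y z : ℝ → ℝ)
    (hx : Differentiable ℝ x) (hx' : Differentiable ℝ (deriv x))
    (hy : Differentiable ℝ y) (hy' : Differentiable ℝ (deriv y))
    (hz : Differentiable ℝ z) (hz' : Differentiable ℝ (deriv z))
    (hx0 : ∀ t, x t ≠ 0)
    (heqx : ∀ t, deriv (deriv x) t = -k₁ * x t + 2 * k₂ / (x t)^3)
    (heqy : ∀ t, deriv (deriv y) t = -4 * k₁ * y t - k₃)
    (heqz : ∀ t, deriv (deriv z) t = - deriv F (z t)) :
    ∀ s t : ℝ,
      (x s * deriv y s - y s * deriv x s) * deriv x s + k₁ * y s * (x s)^2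
        - 2 * k₂ * y s / (x s)^2 + (k₃/2) * (x s)^2
      = (x t * deriv y t - y t * deriv x t) * deriv x t + k₁ * y t * (x t)^2
        - 2 * k₂ * y t / (x t)^2 + (k₃/2) * (x t)^2 := by
  set I : ℝ → ℝ := fun t =>
      (x t * deriv y t - y t * deriv x t) * deriv x t + k₁ * y t * (x t)^2
        - 2 * k₂ * y t / (x t)^2 + (k₃/2) * (x t)^2 with hI
  have key : ∀ t, HasDerivAt I 0 t := by
    intro t
    have hxd : HasDerivAt x (deriv x t) t := (hx t).hasDerivAt
    have hxd' : HasDerivAt (deriv x) (deriv (deriv x) t) t := (hx' t).hasDerivAt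
    have hyd : HasDerivAt y (deriv y t) t := (hy t).hasDerivAt
    have hyd' : HasDerivAt (deriv y) (deriv (deriv y) t) t := (hy' t).hasDerivAt
    have hx2 : HasDerivAt (fun t => (x t)^2) (2 * x t ^ 1 * deriv x t) t := by
      simpa using hxd.fun_pow 2
    have hx2ne : (x t)^2 ≠ 0 := pow_ne_zero _ (hx0 t)
    have H1 : HasDerivAt (fun t => (x t * deriv y t - y t * deriv x t) * deriv x t)
        ((deriv x t * deriv y t + x t * deriv (deriv y) t
          - (deriv y t * deriv x t + y t * deriv (deriv x) t)) * deriv x t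
          + (x t * deriv y t - y t * deriv x t) * deriv (deriv x) t) t :=
      ((hxd.mul hyd').sub (hyd.mul hxd')).mul hxd'
    have H2 : HasDerivAt (fun t => k₁ * y t * (x t)^2)
        ((k₁ * deriv y t) * (x t)^2 + k₁ * y t * (2 * x t ^ 1 * deriv x t)) t :=
      (hyd.const_mul k₁).mul hx2
    have H3 : HasDerivAt (fun t => 2 * k₂ * y t / (x t)^2)
        (((2 * k₂ * deriv y t) * (x t)^2 - 2 * k₂ * y t * (2 * x t ^ 1 * deriv x t))
          / ((x t)^2)^2) t :=
      (hyd.const_mul (2 * k₂)).div hx2 hx2ne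
    have H4 : HasDerivAt (fun t => (k₃/2) * (x t)^2)
        ((k₃/2) * (2 * x t ^ 1 * deriv x t)) t := hx2.const_mul (k₃/2)
    have H := ((H1.add H2).sub H3).add H4
    convert H using 1
    · rfl
    · rfl
    · rfl
    rw [heqx, heqy]
    have hx0t := hx0 t
    field_simp
    ring
  have hdiff : Differentiable ℝ I := fun t => (key t).differentiableAt
  have hzero : ∀ t, deriv I t = 0 := fun t => (key t).deriv
  intro s t
  exact is_const_of_deriv_eq_zero hdiff hzero s t
end

section
/- Let k, c ∈ ℝ and let x : ℝ → ℝ be twice differentiable with x(t) + c ≠ 0 for all t, satisfying x'' = 2k/(x + c)³ (the equation of motion for V(x) = k/(x+c)²). Then the quantity I(t) = -(t²/2)x'² + t(x + c)x' - t² k/(x + c)² - (1/2)x² - c x is constant in t. -/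
theorem stmt_6 (k c : ℝ) (x : ℝ → ℝ)
    (hx : Differentiable ℝ x) (hx' : Differentiable ℝ (deriv x))
    (hx0 : ∀ t, x t + c ≠ 0)
    (heq : ∀ t, deriv (deriv x) t = 2 * k / (x t + c)^3) :
    ∀ s t : ℝ,
      -(s^2/2) * (deriv x s)^2 + s * (x s + c) * deriv x s - s^2 * k / (x s + c)^2
        - (1/2) * (x s)^2 - c * x s
      = -(t^2/2) * (deriv x t)^2 + t * (x t + c) * deriv x t - t^2 * k / (x t + c)^2
        - (1/2) * (x t)^2 - c * x t := by
  set f : ℝ → ℝ := fun t =>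
    -(t^2/2) * (deriv x t)^2 + t * (x t + c) * deriv x t - t^2 * k / (x t + c)^2
      - (1/2) * (x t)^2 - c * x t with hf
  have key : ∀ t, HasDerivAt f 0 t := by
    intro t
    have hu : x t + c ≠ 0 := hx0 t
    have hv : HasDerivAt x (deriv x t) t := (hx t).hasDerivAt
    have ha : HasDerivAt (deriv x) (2 * k / (x t + c)^3) t := by
      have h := (hx' t).hasDerivAt
      rwa [heq t] at h
    have h1 := (((hasDerivAt_pow 2 t).div_const 2).neg).mul (ha.pow 2)
    have h2 := ((hasDerivAt_id t).mul (hv.add_const c)).mul ha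
    have h3 := ((hasDerivAt_pow 2 t).mul_const k).div ((hv.add_const c).pow 2)
      (pow_ne_zero 2 hu)
    have h4 := (hv.pow 2).const_mul ((1:ℝ)/2)
    have h5 := hv.const_mul c
    have H := ((((h1.add h2).sub h3).sub h4).sub h5)
    convert H using 1
    · rfl
    · rfl
    · rfl
    simp only [id_eq, Nat.cast_ofNat, pow_one, Pi.pow_apply, Pi.mul_apply, Pi.neg_apply]
    field_simp
    ring
  intro s t
  exact is_const_of_deriv_eq_zero (fun u => (key u).differentiableAt)
    (fun u => (key u).deriv) s t
end

section
/- Let F₁ : ℝ → ℝ be differentiable and let F₂ : ℝ × ℝ → ℝ be differentiable. Let x, y, z : ℝ → ℝ be twice differentiable with x(t) ≠ 0 for all t, and suppose they satisfy the equations of motion ẍ = -∂V/∂x, ÿ = -∂V/∂y, z̈ = -∂V/∂z for the potential V(x,y,z) = F₁(y/x)/(x² + y²) + F₂(x² + y², z). Then I(t) = (1/2) M₃(t)² + F₁(y(t)/x(t)), where M₃ = x ẏ - y ẋ, is constant in t. -/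
private lemma stmt7_alg (X Y d f a b R : ℝ) (hX : X ≠ 0) (hR : R = X^2+Y^2) (hlin : X*b = Y*a) :
    X * (-(d*(1/X)/R + f*(-(2*Y)/R^2) + b)) - Y * (-(d*(-Y/X^2)/R + f*(-(2*X)/R^2) + a))
      = -(d/X^2) := by
  have hRne : R ≠ 0 := by
    rw [hR]
    exact ne_of_gt (add_pos_of_pos_of_nonneg (by positivity) (sq_nonneg Y))
  have hb : b = Y*a/X := by rw [eq_div_iff hX]; linarith
  subst hb
  field_simp
  rw [hR]; ring

theorem stmt_7 (F₁ : ℝ → ℝ) (hF₁ : Differentiable ℝ F₁)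
    (F₂ : ℝ × ℝ → ℝ) (hF₂ : Differentiable ℝ F₂)
    (x y z : ℝ → ℝ)
    (hx : Differentiable ℝ x) (hx' : Differentiable ℝ (deriv x))
    (hy : Differentiable ℝ y) (hy' : Differentiable ℝ (deriv y))
    (hz : Differentiable ℝ z) (hz' : Differentiable ℝ (deriv z))
    (hx0 : ∀ t, x t ≠ 0)
    (heqx : ∀ t, deriv (deriv x) t =
      -( deriv F₁ (y t / x t) * (-(y t) / (x t)^2) / ((x t)^2 + (y t)^2)
        + F₁ (y t / x t) * (-(2 * x t) / ((x t)^2 + (y t)^2)^2)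
        + fderiv ℝ F₂ (((x t)^2 + (y t)^2), z t) (2 * x t, 0) ))
    (heqy : ∀ t, deriv (deriv y) t =
      -( deriv F₁ (y t / x t) * (1 / x t) / ((x t)^2 + (y t)^2)
        + F₁ (y t / x t) * (-(2 * y t) / ((x t)^2 + (y t)^2)^2)
        + fderiv ℝ F₂ (((x t)^2 + (y t)^2), z t) (2 * y t, 0) ))
    (heqz : ∀ t, deriv (deriv z) t =
      -( fderiv ℝ F₂ (((x t)^2 + (y t)^2), z t) (0, 1) )) :
    ∀ s t : ℝ,
      (1/2) * (x s * deriv y s - y s * deriv x s)^2 + F₁ (y s / x s)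
      = (1/2) * (x t * deriv y t - y t * deriv x t)^2 + F₁ (y t / x t) := by
  have key : ∀ t, HasDerivAt (fun s => (1/2) * (x s * deriv y s - y s * deriv x s)^2 + F₁ (y s / x s)) 0 t := by
    intro t
    have hxt := (hx t).hasDerivAt
    have hyt := (hy t).hasDerivAt
    have hxt' := (hx' t).hasDerivAt
    have hyt' := (hy' t).hasDerivAt
    have hM : HasDerivAt (fun s => x s * deriv y s - y s * deriv x s)
        (x t * deriv (deriv y) t - y t * deriv (deriv x) t) t := by
      have h := (hxt.mul hyt').sub (hyt.mul hxt')
      exact h.congr_deriv (by ring)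
    have hu : HasDerivAt (fun s => y s / x s)
        ((deriv y t * x t - y t * deriv x t) / (x t)^2) t := hyt.div hxt (hx0 t)
    have hF : HasDerivAt (fun s => F₁ (y s / x s))
        (deriv F₁ (y t / x t) * ((deriv y t * x t - y t * deriv x t) / (x t)^2)) t :=
      (hF₁ (y t / x t)).hasDerivAt.comp t hu
    have hI := ((hM.pow 2).const_mul (1/2 : ℝ)).add hF
    have hlin : x t * fderiv ℝ F₂ ((x t)^2 + (y t)^2, z t) (2 * y t, 0)
        = y t * fderiv ℝ F₂ ((x t)^2 + (y t)^2, z t) (2 * x t, 0) := by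
      have h1 : (x t) • ((2 * y t, (0:ℝ)) : ℝ × ℝ) = (y t) • ((2 * x t, (0:ℝ)) : ℝ × ℝ) := by
        simp [Prod.ext_iff, smul_eq_mul]
        ring
      have h2 := congrArg (fderiv ℝ F₂ ((x t)^2 + (y t)^2, z t)) h1
      rw [map_smul, map_smul] at h2
      simpa [smul_eq_mul] using h2
    have hMd : x t * deriv (deriv y) t - y t * deriv (deriv x) t
        = -(deriv F₁ (y t / x t) / (x t)^2) := by
      rw [heqx t, heqy t]
      exact stmt7_alg (x t) (y t) (deriv F₁ (y t / x t)) (F₁ (y t / x t)) _ _ _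
        (hx0 t) rfl hlin
    rw [hMd] at hI
    refine hI.congr_deriv ?_
    have hx2 : (x t)^2 ≠ 0 := pow_ne_zero 2 (hx0 t)
    field_simp
    ring
  intro s t
  exact is_const_of_deriv_eq_zero (fun u => (key u).differentiableAt)
    (fun u => (key u).deriv) s t
end

section
/- Let k₁, k₂, k₃ ∈ ℝ and let F : ℝ → ℝ be differentiable. Let x, y, z : ℝ → ℝ be twice differentiable with y(t) ≠ 0 and z(t) ≠ 0 for all t, satisfying the equations of motion for the potential V = k₁/x² + k₂/y² + k₃/z² + F(x² + y² + z²) (where F is composed with r² = x²+y²+z²; assume also x(t) ≠ 0). Then I₁(t) = (1/2)(y ż - z ẏ)² + k₂ z²/y² + k₃ y²/z² is constant in t. -/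
theorem stmt_8 (k₁ k₂ k₃ : ℝ) (F : ℝ → ℝ) (hF : Differentiable ℝ F)
    (x y z : ℝ → ℝ)
    (hx : Differentiable ℝ x) (hx' : Differentiable ℝ (deriv x))
    (hy : Differentiable ℝ y) (hy' : Differentiable ℝ (deriv y))
    (hz : Differentiable ℝ z) (hz' : Differentiable ℝ (deriv z))
    (hx0 : ∀ t, x t ≠ 0) (hy0 : ∀ t, y t ≠ 0) (hz0 : ∀ t, z t ≠ 0)
    (heqx : ∀ t, deriv (deriv x) t =
      2 * k₁ / (x t)^3 - deriv F ((x t)^2 + (y t)^2 + (z t)^2) * (2 * x t))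
    (heqy : ∀ t, deriv (deriv y) t =
      2 * k₂ / (y t)^3 - deriv F ((x t)^2 + (y t)^2 + (z t)^2) * (2 * y t))
    (heqz : ∀ t, deriv (deriv z) t =
      2 * k₃ / (z t)^3 - deriv F ((x t)^2 + (y t)^2 + (z t)^2) * (2 * z t)) :
    ∀ s t : ℝ,
      (1/2) * (y s * deriv z s - z s * deriv y s)^2
        + k₂ * (z s)^2 / (y s)^2 + k₃ * (y s)^2 / (z s)^2
      = (1/2) * (y t * deriv z t - z t * deriv y t)^2
        + k₂ * (z t)^2 / (y t)^2 + k₃ * (y t)^2 / (z t)^2 := by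
  set f : ℝ → ℝ := fun t =>
    (1/2) * (y t * deriv z t - z t * deriv y t)^2
      + k₂ * (z t)^2 / (y t)^2 + k₃ * (y t)^2 / (z t)^2 with hf
  have key : ∀ t, HasDerivAt f 0 t := by
    intro t
    have hM : HasDerivAt (fun t => y t * deriv z t - z t * deriv y t)
        (deriv y t * deriv z t + y t * deriv (deriv z) t
          - (deriv z t * deriv y t + z t * deriv (deriv y) t)) t :=
      ((hy t).hasDerivAt.mul (hz' t).hasDerivAt).sub
        ((hz t).hasDerivAt.mul (hy' t).hasDerivAt)
    have h2 := (hM.pow 2).const_mul (1/2 : ℝ)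
    have h3 := (((hz t).hasDerivAt.pow 2).const_mul k₂).div
      ((hy t).hasDerivAt.pow 2) (pow_ne_zero 2 (hy0 t))
    have h4 := (((hy t).hasDerivAt.pow 2).const_mul k₃).div
      ((hz t).hasDerivAt.pow 2) (pow_ne_zero 2 (hz0 t))
    have h := (h2.add h3).add h4
    refine h.congr_deriv ?_
    symm
    simp only [Pi.pow_apply]
    rw [heqy t, heqz t]
    have hy2 : (y t)^2 ≠ 0 := pow_ne_zero 2 (hy0 t)
    have hz2 : (z t)^2 ≠ 0 := pow_ne_zero 2 (hz0 t)
    push_cast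
    field_simp [hy0 t, hz0 t]
    ring
  intro s t
  have := is_const_of_deriv_eq_zero (f := f)
    (fun u => (key u).differentiableAt) (fun u => (key u).deriv) s t
  simpa [hf] using this
end

section
/- Let k₁, k₂, k₃, k₄ ∈ ℝ and let x, y, z : ℝ → ℝ be twice differentiable with x(t) ≠ 0 and y(t) ≠ 0 for all t, satisfying the equations of motion for V = k₁(x² + y² + 4z²) + k₂/x² + k₃/y² + k₄ z, namely ẍ = -2k₁x + 2k₂/x³, ÿ = -2k₁y + 2k₃/y³, z̈ = -8k₁z - k₄. Then J₁(t) = M₂ ẋ + 2z(k₂/x² - k₁x²) - (k₄/2)x², where M₂ = z ẋ - x ż, is constant in t. -/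
theorem stmt_9 (k₁ k₂ k₃ k₄ : ℝ) (x y z : ℝ → ℝ)
    (hx : Differentiable ℝ x) (hx' : Differentiable ℝ (deriv x))
    (hy : Differentiable ℝ y) (hy' : Differentiable ℝ (deriv y))
    (hz : Differentiable ℝ z) (hz' : Differentiable ℝ (deriv z))
    (hx0 : ∀ t, x t ≠ 0) (hy0 : ∀ t, y t ≠ 0)
    (heqx : ∀ t, deriv (deriv x) t = -2 * k₁ * x t + 2 * k₂ / (x t)^3)
    (heqy : ∀ t, deriv (deriv y) t = -2 * k₁ * y t + 2 * k₃ / (y t)^3)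
    (heqz : ∀ t, deriv (deriv z) t = -8 * k₁ * z t - k₄) :
    ∀ s t : ℝ,
      (z s * deriv x s - x s * deriv z s) * deriv x s
        + 2 * z s * (k₂ / (x s)^2 - k₁ * (x s)^2) - (k₄/2) * (x s)^2
      = (z t * deriv x t - x t * deriv z t) * deriv x t
        + 2 * z t * (k₂ / (x t)^2 - k₁ * (x t)^2) - (k₄/2) * (x t)^2 := by
  set f : ℝ → ℝ := fun u => (z u * deriv x u - x u * deriv z u) * deriv x u
        + 2 * z u * (k₂ / (x u)^2 - k₁ * (x u)^2) - (k₄/2) * (x u)^2 with hfdef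
  have key : ∀ u, HasDerivAt f 0 u := by
    intro u
    have hX : HasDerivAt x (deriv x u) u := (hx u).hasDerivAt
    have hX' : HasDerivAt (deriv x) (deriv (deriv x) u) u := (hx' u).hasDerivAt
    have hZ : HasDerivAt z (deriv z u) u := (hz u).hasDerivAt
    have hZ' : HasDerivAt (deriv z) (deriv (deriv z) u) u := (hz' u).hasDerivAt
    have hx2 : (x u)^2 ≠ 0 := pow_ne_zero _ (hx0 u)
    have h1 : HasDerivAt (fun u => (z u * deriv x u - x u * deriv z u) * deriv x u)
        (((deriv z u * deriv x u + z u * deriv (deriv x) u)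
          - (deriv x u * deriv z u + x u * deriv (deriv z) u)) * deriv x u
          + (z u * deriv x u - x u * deriv z u) * deriv (deriv x) u) u :=
      ((hZ.mul hX').sub (hX.mul hZ')).mul hX'
    have h2 : HasDerivAt (fun u => k₂ / (x u)^2)
        ((0 * (x u)^2 - k₂ * ((2:ℕ) * x u ^ (2-1) * deriv x u)) / ((x u)^2)^2) u :=
      (hasDerivAt_const u k₂).div (hX.pow 2) hx2
    have h3 : HasDerivAt (fun u => k₁ * (x u)^2)
        (k₁ * ((2:ℕ) * x u ^ (2-1) * deriv x u)) u := (hX.pow 2).const_mul k₁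
    have h4 : HasDerivAt (fun u => 2 * z u * (k₂ / (x u)^2 - k₁ * (x u)^2))
        (2 * deriv z u * (k₂ / (x u)^2 - k₁ * (x u)^2)
          + 2 * z u * ((0 * (x u)^2 - k₂ * ((2:ℕ) * x u ^ (2-1) * deriv x u)) / ((x u)^2)^2
            - k₁ * ((2:ℕ) * x u ^ (2-1) * deriv x u))) u := by
      have := ((hZ.const_mul 2).mul (h2.sub h3))
      exact this
    have h5 : HasDerivAt (fun u => (k₄/2) * (x u)^2)
        ((k₄/2) * ((2:ℕ) * x u ^ (2-1) * deriv x u)) u := (hX.pow 2).const_mul (k₄/2)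
    have h := (h1.add h4).sub h5
    refine h.congr_deriv ?_
    rw [heqx u, heqz u]
    have hx3 : (x u)^3 ≠ 0 := pow_ne_zero _ (hx0 u)
    field_simp [hx0 u]
    ring
  have hd : Differentiable ℝ f := fun u => (key u).differentiableAt
  have h0 : ∀ u, deriv f u = 0 := fun u => (key u).deriv
  intro s t
  exact is_const_of_deriv_eq_zero hd h0 s t
end

section
/- Let k₁ ∈ ℝ, b ∈ ℝ, and let F₁ : ℂ → ℂ be differentiable (as a function of the complex variable w = y ± iz ; fix the + sign). Let x, y, z : ℝ → ℂ be twice differentiable with x(t) ≠ 0 for all t, satisfying the complexified equations of motion for V(x,y,z) = k₁/x² + F₁(y + iz): ẍ = 2k₁/x³, ÿ = -F₁'(y + iz), z̈ = -i F₁'(y + iz). Then J₁(t) = ẏ(t) + i ż(t) is constant in t, and J₃(t) = (i M₂ - M₃) ẋ + 2k₁(y + iz)/x², with M₂ = zẋ - xż and M₃ = xẏ - yẋ, is constant in t. -/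
theorem stmt_10 (k₁ b : ℝ) (F₁ : ℂ → ℂ) (hF₁ : Differentiable ℂ F₁)
    (x y z : ℝ → ℂ)
    (hx : Differentiable ℝ x) (hx' : Differentiable ℝ (deriv x))
    (hy : Differentiable ℝ y) (hy' : Differentiable ℝ (deriv y))
    (hz : Differentiable ℝ z) (hz' : Differentiable ℝ (deriv z))
    (hx0 : ∀ t, x t ≠ 0)
    (heqx : ∀ t, deriv (deriv x) t = 2 * (k₁ : ℂ) / (x t)^3)
    (heqy : ∀ t, deriv (deriv y) t = - deriv F₁ (y t + Complex.I * z t))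
    (heqz : ∀ t, deriv (deriv z) t = - Complex.I * deriv F₁ (y t + Complex.I * z t)) :
    (∀ s t : ℝ, deriv y s + Complex.I * deriv z s = deriv y t + Complex.I * deriv z t) ∧
    (∀ s t : ℝ,
      (Complex.I * (z s * deriv x s - x s * deriv z s)
        - (x s * deriv y s - y s * deriv x s)) * deriv x s
        + 2 * (k₁ : ℂ) * (y s + Complex.I * z s) / (x s)^2
      = (Complex.I * (z t * deriv x t - x t * deriv z t)
        - (x t * deriv y t - y t * deriv x t)) * deriv x t
        + 2 * (k₁ : ℂ) * (y t + Complex.I * z t) / (x t)^2) := by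
  set w : ℝ → ℂ := fun t => y t + Complex.I * z t with hw_def
  have hw : Differentiable ℝ w := hy.add (hz.const_mul Complex.I)
  have hwt : ∀ t, HasDerivAt w (deriv y t + Complex.I * deriv z t) t := fun t =>
    (hy t).hasDerivAt.add ((hz t).hasDerivAt.const_mul Complex.I)
  have hdw : deriv w = fun t => deriv y t + Complex.I * deriv z t :=
    funext fun t => (hwt t).deriv
  have hdw_diff : Differentiable ℝ (deriv w) := by
    rw [hdw]; exact hy'.add (hz'.const_mul Complex.I)
  have hw'' : ∀ t, deriv (deriv w) t = 0 := by
    intro t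
    rw [hdw]
    have : HasDerivAt (fun t => deriv y t + Complex.I * deriv z t)
        (deriv (deriv y) t + Complex.I * deriv (deriv z) t) t :=
      (hy' t).hasDerivAt.add ((hz' t).hasDerivAt.const_mul Complex.I)
    rw [this.deriv, heqy, heqz]
    linear_combination (-deriv F₁ (y t + Complex.I * z t)) * Complex.I_sq
  have hconst1 : ∀ s t : ℝ, deriv w s = deriv w t :=
    is_const_of_deriv_eq_zero hdw_diff hw''
  constructor
  · intro s t
    have := hconst1 s t
    rw [hdw] at this
    exact this
  · set g : ℝ → ℂ := fun t =>
      (w t * deriv x t - x t * deriv w t) * deriv x t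
        + 2 * (k₁ : ℂ) * w t / (x t) ^ 2 with hg_def
    have hg0 : ∀ t, HasDerivAt g 0 t := by
      intro t
      have hXt := (hx t).hasDerivAt
      have hX't : HasDerivAt (deriv x) (2 * (k₁ : ℂ) / (x t) ^ 3) t := by
        have := (hx' t).hasDerivAt
        rwa [heqx t] at this
      have hWt := (hw t).hasDerivAt
      have hW't : HasDerivAt (deriv w) 0 t := by
        have := (hdw_diff t).hasDerivAt
        rwa [hw'' t] at this
      have h1 := ((hWt.mul hX't).sub (hXt.mul hW't)).mul hX't
      have h4 := hWt.const_mul (2 * (k₁ : ℂ))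
      have h5 : HasDerivAt (fun t => (x t) ^ 2) (deriv x t * x t + x t * deriv x t) t := by
        have := hXt.mul hXt; simp only [pow_two]; exact this
      have h6 := h4.div h5 (pow_ne_zero 2 (hx0 t))
      have hg := h1.add h6
      refine hg.congr_deriv ?_
      have hx3 : (x t) ^ 3 ≠ 0 := pow_ne_zero 3 (hx0 t)
      rw [show (w * deriv x - x * deriv w) t = w t * deriv x t - x t * deriv w t from rfl]
      field_simp [hx0 t]
      ring
    have hconst2 : ∀ s t : ℝ, g s = g t :=
      is_const_of_deriv_eq_zero (fun t => (hg0 t).differentiableAt)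
        (fun t => (hg0 t).deriv)
    intro s t
    have key := hconst2 s t
    simp only [hg_def, hdw, hw_def] at key
    calc (Complex.I * (z s * deriv x s - x s * deriv z s)
        - (x s * deriv y s - y s * deriv x s)) * deriv x s
        + 2 * (k₁ : ℂ) * (y s + Complex.I * z s) / (x s)^2
        = ((y s + Complex.I * z s) * deriv x s
            - x s * (deriv y s + Complex.I * deriv z s)) * deriv x s
          + 2 * (k₁ : ℂ) * (y s + Complex.I * z s) / (x s) ^ 2 := by ring
      _ = ((y t + Complex.I * z t) * deriv x t
            - x t * (deriv y t + Complex.I * deriv z t)) * deriv x t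
          + 2 * (k₁ : ℂ) * (y t + Complex.I * z t) / (x t) ^ 2 := by
          rw [← (hwt s).deriv, ← (hwt t).deriv]; exact key
      _ = _ := by ring
end

section
/- Let k₁, k₂, k₃ ∈ ℝ and m₁, m₂, m₃ ∈ ℝ. Let x, y, z : ℝ → ℝ be twice differentiable with x+m₁, y+m₂, z+m₃ nowhere zero, satisfying ẍ = 2k₁/(x+m₁)³, ÿ = 2k₂/(y+m₂)³, z̈ = 2k₃/(z+m₃)³ (equations of motion for V = k₁/(x+m₁)² + k₂/(y+m₂)² + k₃/(z+m₃)²). Then the six quantities I₁ = ẋ²/2 + k₁/(x+m₁)², I₂ = ẏ²/2 + k₂/(y+m₂)², I₃ = ż²/2 + k₃/(z+m₃)², I₄(t) = -2I₁t + (x+m₁)ẋ, I₅(t) = -2I₂t + (y+m₂)ẏ, I₆(t) = -2I₃t + (z+m₃)ż are all constant in t. -/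
lemma aux (k m : ℝ) (x : ℝ → ℝ) (hx : Differentiable ℝ x)
    (hx' : Differentiable ℝ (deriv x)) (hx0 : ∀ t, x t + m ≠ 0)
    (heq : ∀ t, deriv (deriv x) t = 2 * k / (x t + m)^3) :
    (∀ s t : ℝ, (deriv x s)^2/2 + k/(x s + m)^2 = (deriv x t)^2/2 + k/(x t + m)^2) ∧
    (∀ s t : ℝ, -2 * ((deriv x s)^2/2 + k/(x s + m)^2) * s + (x s + m) * deriv x s
      = -2 * ((deriv x t)^2/2 + k/(x t + m)^2) * t + (x t + m) * deriv x t) := by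
  set E : ℝ → ℝ := fun t => (deriv x t)^2/2 + k/(x t + m)^2 with hE
  have hEd : ∀ t, HasDerivAt E 0 t := by
    intro t
    have h1 : HasDerivAt (fun t => (deriv x t)^2/2) (deriv x t * deriv (deriv x) t) t := by
      have := ((hx'.differentiableAt (x := t)).hasDerivAt.fun_pow 2).div_const 2
      refine this.congr_deriv ?_
      ring
    have h2 : HasDerivAt (fun t => k/(x t + m)^2)
        (-(k * (2 * (x t + m) * deriv x t)) / ((x t + m)^2)^2) t := by
      have hb : HasDerivAt (fun t => (x t + m)^2) (2 * (x t + m) * deriv x t) t := by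
        have := ((hx.differentiableAt (x := t)).hasDerivAt.add_const m).fun_pow 2
        simpa [mul_comm, mul_assoc, mul_left_comm] using this
      simpa using (hasDerivAt_const t k).fun_div hb (pow_ne_zero 2 (hx0 t))
    have := h1.add h2
    refine this.congr_deriv ?_
    rw [heq t]
    have h0 := hx0 t
    field_simp
    ring
  have hEc : ∀ s t : ℝ, E s = E t :=
    is_const_of_deriv_eq_zero (fun t => (hEd t).differentiableAt)
      (fun t => (hEd t).deriv)
  refine ⟨hEc, ?_⟩
  have hJc : ∀ s t : ℝ, -2 * E 0 * s + (x s + m) * deriv x s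
      = -2 * E 0 * t + (x t + m) * deriv x t := by
    apply is_const_of_deriv_eq_zero
    · exact fun t => (((differentiable_const _).mul differentiable_id).add
        ((hx.add_const m).mul hx')).differentiableAt
    · intro t
      have h1 : HasDerivAt (fun t : ℝ => -2 * E 0 * t + (x t + m) * deriv x t)
          (-2 * E 0 + ((deriv x t) * deriv x t + (x t + m) * deriv (deriv x) t)) t := by
        have ha : HasDerivAt (fun t : ℝ => -2 * E 0 * t) (-2 * E 0) t := by
          simpa using (hasDerivAt_id t).const_mul (-2 * E 0)
        exact ha.add ((((hx.differentiableAt).hasDerivAt.add_const m).mul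
          (hx'.differentiableAt).hasDerivAt))
      rw [h1.deriv, heq t]
      have hE0 : E 0 = E t := hEc 0 t
      rw [hE0]
      show -2 * ((deriv x t)^2/2 + k/(x t + m)^2) + _ = 0
      have h0 := hx0 t
      field_simp
      ring
  intro s t
  have := hJc s t
  calc -2 * E s * s + (x s + m) * deriv x s
      = -2 * E 0 * s + (x s + m) * deriv x s := by rw [hEc s 0]
    _ = -2 * E 0 * t + (x t + m) * deriv x t := this
    _ = -2 * E t * t + (x t + m) * deriv x t := by rw [hEc t 0]

theorem stmt_12 (k₁ k₂ k₃ m₁ m₂ m₃ : ℝ) (x y z : ℝ → ℝ)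
    (hx : Differentiable ℝ x) (hx' : Differentiable ℝ (deriv x))
    (hy : Differentiable ℝ y) (hy' : Differentiable ℝ (deriv y))
    (hz : Differentiable ℝ z) (hz' : Differentiable ℝ (deriv z))
    (hx0 : ∀ t, x t + m₁ ≠ 0) (hy0 : ∀ t, y t + m₂ ≠ 0) (hz0 : ∀ t, z t + m₃ ≠ 0)
    (heqx : ∀ t, deriv (deriv x) t = 2 * k₁ / (x t + m₁)^3)
    (heqy : ∀ t, deriv (deriv y) t = 2 * k₂ / (y t + m₂)^3)
    (heqz : ∀ t, deriv (deriv z) t = 2 * k₃ / (z t + m₃)^3) :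
    (∀ s t : ℝ, (deriv x s)^2/2 + k₁/(x s + m₁)^2 = (deriv x t)^2/2 + k₁/(x t + m₁)^2) ∧
    (∀ s t : ℝ, (deriv y s)^2/2 + k₂/(y s + m₂)^2 = (deriv y t)^2/2 + k₂/(y t + m₂)^2) ∧
    (∀ s t : ℝ, (deriv z s)^2/2 + k₃/(z s + m₃)^2 = (deriv z t)^2/2 + k₃/(z t + m₃)^2) ∧
    (∀ s t : ℝ, -2 * ((deriv x s)^2/2 + k₁/(x s + m₁)^2) * s + (x s + m₁) * deriv x s
      = -2 * ((deriv x t)^2/2 + k₁/(x t + m₁)^2) * t + (x t + m₁) * deriv x t) ∧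
    (∀ s t : ℝ, -2 * ((deriv y s)^2/2 + k₂/(y s + m₂)^2) * s + (y s + m₂) * deriv y s
      = -2 * ((deriv y t)^2/2 + k₂/(y t + m₂)^2) * t + (y t + m₂) * deriv y t) ∧
    (∀ s t : ℝ, -2 * ((deriv z s)^2/2 + k₃/(z s + m₃)^2) * s + (z s + m₃) * deriv z s
      = -2 * ((deriv z t)^2/2 + k₃/(z t + m₃)^2) * t + (z t + m₃) * deriv z t) := by
  exact ⟨(aux k₁ m₁ x hx hx' hx0 heqx).1, (aux k₂ m₂ y hy hy' hy0 heqy).1,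
    (aux k₃ m₃ z hz hz' hz0 heqz).1, (aux k₁ m₁ x hx hx' hx0 heqx).2,
    (aux k₂ m₂ y hy hy' hy0 heqy).2, (aux k₃ m₃ z hz hz' hz0 heqz).2⟩
end

section
/- Let λ ≠ 0 and c₁, c₂ ∈ ℝ, and let F : ℝ × ℝ → ℝ be differentiable. Let x, y, z : ℝ → ℝ be twice differentiable satisfying the equations of motion for the potential V(x,y,z) = (λ²/2)(c₁² - 1)x² + c₂x - c₁λ²xy + F(y - c₁x, z). Then the quantity I(t) = e^(λt) (λẋ + c₁λẏ - λ²x - c₁λ²y + c₂) is constant in t. -/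
theorem stmt_15 (lam c₁ c₂ : ℝ) (hlam : lam ≠ 0)
    (F : ℝ × ℝ → ℝ) (hF : Differentiable ℝ F)
    (x y z : ℝ → ℝ)
    (hx : Differentiable ℝ x) (hx' : Differentiable ℝ (deriv x))
    (hy : Differentiable ℝ y) (hy' : Differentiable ℝ (deriv y))
    (hz : Differentiable ℝ z) (hz' : Differentiable ℝ (deriv z))
    (heqx : ∀ t, deriv (deriv x) t =
      -( lam^2 * (c₁^2 - 1) * x t + c₂ - c₁ * lam^2 * y t
        + fderiv ℝ F (y t - c₁ * x t, z t) (-c₁, 0) ))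
    (heqy : ∀ t, deriv (deriv y) t =
      -( -c₁ * lam^2 * x t + fderiv ℝ F (y t - c₁ * x t, z t) (1, 0) ))
    (heqz : ∀ t, deriv (deriv z) t =
      -( fderiv ℝ F (y t - c₁ * x t, z t) (0, 1) )) :
    ∀ s t : ℝ,
      Real.exp (lam * s) * (lam * deriv x s + c₁ * lam * deriv y s
        - lam^2 * x s - c₁ * lam^2 * y s + c₂)
      = Real.exp (lam * t) * (lam * deriv x t + c₁ * lam * deriv y t
        - lam^2 * x t - c₁ * lam^2 * y t + c₂) := by
  set g : ℝ → ℝ := fun u => Real.exp (lam * u) * (lam * deriv x u + c₁ * lam * deriv y u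
    - lam^2 * x u - c₁ * lam^2 * y u + c₂) with hg_def
  have key : ∀ u : ℝ, fderiv ℝ F (y u - c₁ * x u, z u) (-c₁, 0)
      = -c₁ * fderiv ℝ F (y u - c₁ * x u, z u) (1, 0) := by
    intro u
    have h : ((-c₁, 0) : ℝ × ℝ) = (-c₁) • ((1, 0) : ℝ × ℝ) := by simp
    rw [h, map_smul, smul_eq_mul]
  have hg : ∀ u : ℝ, HasDerivAt g 0 u := by
    intro u
    have hexp : HasDerivAt (fun u : ℝ => Real.exp (lam * u)) (Real.exp (lam * u) * lam) u :=
      by simpa using ((hasDerivAt_id u).const_mul lam).exp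
    have hinner : HasDerivAt (fun u => lam * deriv x u + c₁ * lam * deriv y u
        - lam^2 * x u - c₁ * lam^2 * y u + c₂)
        (lam * deriv (deriv x) u + c₁ * lam * deriv (deriv y) u
          - lam^2 * deriv x u - c₁ * lam^2 * deriv y u) u := by
      have h1 := ((hx' u).hasDerivAt.const_mul lam)
      have h2 := ((hy' u).hasDerivAt.const_mul (c₁ * lam))
      have h3 := ((hx u).hasDerivAt.const_mul (lam^2))
      have h4 := ((hy u).hasDerivAt.const_mul (c₁ * lam^2))
      simpa using (((h1.add h2).sub h3).sub h4).add_const c₂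
    have := hexp.mul hinner
    refine this.congr_deriv ?_
    rw [heqx u, heqy u, key u]
    ring
  exact fun s t => is_const_of_deriv_eq_zero (fun u => (hg u).differentiableAt)
    (fun u => (hg u).deriv) s t
end

section
/- Let λ, c ∈ ℝ with λ ≠ 0 and let F : ℝ → ℝ be differentiable. Let x, y, z : ℝ → ℝ be twice differentiable satisfying ẍ = λ²x, ÿ = c F'(z - cy), z̈ = -F'(z - cy) (equations of motion for V = -(λ²/2)x² + F(z - cy)). Then the three quantities I₁ = ẋ²/2 - (λ²/2)x², I₂ = ẏ + cż, I₃(t) = e^(λt)(ẋ - λx) are all constant in t. -/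
theorem stmt_16 (lam c : ℝ) (hlam : lam ≠ 0) (F : ℝ → ℝ) (hF : Differentiable ℝ F)
    (x y z : ℝ → ℝ)
    (hx : Differentiable ℝ x) (hx' : Differentiable ℝ (deriv x))
    (hy : Differentiable ℝ y) (hy' : Differentiable ℝ (deriv y))
    (hz : Differentiable ℝ z) (hz' : Differentiable ℝ (deriv z))
    (heqx : ∀ t, deriv (deriv x) t = lam^2 * x t)
    (heqy : ∀ t, deriv (deriv y) t = c * deriv F (z t - c * y t))
    (heqz : ∀ t, deriv (deriv z) t = - deriv F (z t - c * y t)) :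
    (∀ s t : ℝ, (deriv x s)^2/2 - (lam^2/2) * (x s)^2
      = (deriv x t)^2/2 - (lam^2/2) * (x t)^2) ∧
    (∀ s t : ℝ, deriv y s + c * deriv z s = deriv y t + c * deriv z t) ∧
    (∀ s t : ℝ, Real.exp (lam * s) * (deriv x s - lam * x s)
      = Real.exp (lam * t) * (deriv x t - lam * x t)) := by
  refine ⟨?_, ?_, ?_⟩
  · intro s t
    apply is_const_of_deriv_eq_zero (f := fun u => (deriv x u)^2/2 - (lam^2/2) * (x u)^2)
    · fun_prop
    · intro u
      have h1 : HasDerivAt (fun u => (deriv x u)^2/2 - (lam^2/2) * (x u)^2)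
          (2 * deriv x u ^ 1 * deriv (deriv x) u / 2 - lam^2/2 * (2 * x u ^ 1 * deriv x u)) u := by
        exact (((hx' u).hasDerivAt.pow 2).div_const 2).sub
          (((hx u).hasDerivAt.pow 2).const_mul (lam^2/2))
      rw [h1.deriv, heqx]; ring
  · intro s t
    apply is_const_of_deriv_eq_zero (f := fun u => deriv y u + c * deriv z u)
    · fun_prop
    · intro u
      have h1 : HasDerivAt (fun u => deriv y u + c * deriv z u)
          (deriv (deriv y) u + c * deriv (deriv z) u) u :=
        (hy' u).hasDerivAt.add ((hz' u).hasDerivAt.const_mul c)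
      rw [h1.deriv, heqy, heqz]; ring
  · intro s t
    apply is_const_of_deriv_eq_zero
      (f := fun u => Real.exp (lam * u) * (deriv x u - lam * x u))
    · fun_prop
    · intro u
      have he : HasDerivAt (fun u => Real.exp (lam * u)) (lam * Real.exp (lam * u)) u := by
        have := ((hasDerivAt_id u).const_mul lam).exp
        simpa [mul_comm] using this
      have h1 : HasDerivAt (fun u => Real.exp (lam * u) * (deriv x u - lam * x u))
          (lam * Real.exp (lam * u) * (deriv x u - lam * x u)
            + Real.exp (lam * u) * (deriv (deriv x) u - lam * deriv x u)) u :=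
        he.mul ((hx' u).hasDerivAt.sub ((hx u).hasDerivAt.const_mul lam))
      rw [h1.deriv, heqx]; ring
end

section
/- Let λ ≠ 0 and c₁, c₂, k ∈ ℝ. Let x, y, z : ℝ → ℝ be twice differentiable with y(t) + c₂ ≠ 0 for all t, satisfying ẍ = λ²x, ÿ = (λ²/4)(y + c₂) + 2k/(y + c₂)³, z̈ = λ²(z + c₁) (equations of motion for V = -(λ²/8)(4x² + 4z² + y²) - λ²c₁z - (λ²/4)c₂y + k/(y+c₂)²). Then the quantities I₁(t) = e^(λt)(ẋ - λx), I₂(t) = e^(λt)[(ẏ - (λ/2)(y+c₂))² + 2k/(y+c₂)²], I₃(t) = e^(λt)(ż - λ(z+c₁)), and I₄ = (zẋ - xż) + c₁ẋ are all constant in t. -/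
private lemma key_const {f : ℝ → ℝ} (h : ∀ t, HasDerivAt f 0 t) (s t : ℝ) : f s = f t :=
  is_const_of_deriv_eq_zero (fun u => (h u).differentiableAt) (fun u => (h u).deriv) s t

theorem stmt_17 (lam c₁ c₂ k : ℝ) (hlam : lam ≠ 0) (x y z : ℝ → ℝ)
    (hx : Differentiable ℝ x) (hx' : Differentiable ℝ (deriv x))
    (hy : Differentiable ℝ y) (hy' : Differentiable ℝ (deriv y))
    (hz : Differentiable ℝ z) (hz' : Differentiable ℝ (deriv z))
    (hy0 : ∀ t, y t + c₂ ≠ 0)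
    (heqx : ∀ t, deriv (deriv x) t = lam^2 * x t)
    (heqy : ∀ t, deriv (deriv y) t = (lam^2/4) * (y t + c₂) + 2 * k / (y t + c₂)^3)
    (heqz : ∀ t, deriv (deriv z) t = lam^2 * (z t + c₁)) :
    (∀ s t : ℝ, Real.exp (lam * s) * (deriv x s - lam * x s)
      = Real.exp (lam * t) * (deriv x t - lam * x t)) ∧
    (∀ s t : ℝ,
      Real.exp (lam * s) * ((deriv y s - (lam/2) * (y s + c₂))^2 + 2 * k / (y s + c₂)^2)
      = Real.exp (lam * t) * ((deriv y t - (lam/2) * (y t + c₂))^2 + 2 * k / (y t + c₂)^2)) ∧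
    (∀ s t : ℝ, Real.exp (lam * s) * (deriv z s - lam * (z s + c₁))
      = Real.exp (lam * t) * (deriv z t - lam * (z t + c₁))) ∧
    (∀ s t : ℝ, (z s * deriv x s - x s * deriv z s) + c₁ * deriv x s
      = (z t * deriv x t - x t * deriv z t) + c₁ * deriv x t) := by
  have hE : ∀ t : ℝ, HasDerivAt (fun u => Real.exp (lam * u)) (Real.exp (lam * t) * (lam * 1)) t :=
    fun t => ((hasDerivAt_id t).const_mul lam).exp
  refine ⟨key_const ?_, key_const ?_, key_const ?_, key_const ?_⟩
  · intro t
    have hX : HasDerivAt x (deriv x t) t := (hx t).hasDerivAt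
    have hX' : HasDerivAt (deriv x) (lam ^ 2 * x t) t := heqx t ▸ (hx' t).hasDerivAt
    have H := (hE t).mul (hX'.sub (hX.const_mul lam))
    convert H using 1
    · rfl
    · rfl
    · rfl
    simp only [Pi.sub_apply]
    ring
  · intro t
    have hY : HasDerivAt y (deriv y t) t := (hy t).hasDerivAt
    have hY' : HasDerivAt (deriv y) ((lam^2/4) * (y t + c₂) + 2 * k / (y t + c₂)^3) t :=
      heqy t ▸ (hy' t).hasDerivAt
    have hden : HasDerivAt (fun u => (y u + c₂)^2) (2 * (y t + c₂)^(2-1) * deriv y t) t :=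
      (hY.add_const c₂).pow 2
    have hfrac := (hasDerivAt_const t (2*k)).div hden (pow_ne_zero 2 (hy0 t))
    have hA := (hY'.sub ((hY.add_const c₂).const_mul (lam/2))).pow 2
    have H := (hE t).mul ((hA.add hfrac))
    convert H using 1
    · rfl
    · rfl
    · rfl
    have h0 := hy0 t
    simp only [Pi.sub_apply, Pi.add_apply, Pi.pow_apply, Pi.div_apply]
    push_cast
    field_simp
    ring
  · intro t
    have hZ : HasDerivAt z (deriv z t) t := (hz t).hasDerivAt
    have hZ' : HasDerivAt (deriv z) (lam ^ 2 * (z t + c₁)) t := heqz t ▸ (hz' t).hasDerivAt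
    have H := (hE t).mul (hZ'.sub ((hZ.add_const c₁).const_mul lam))
    convert H using 1
    · rfl
    · rfl
    · rfl
    simp only [Pi.sub_apply]
    ring
  · intro t
    have hX : HasDerivAt x (deriv x t) t := (hx t).hasDerivAt
    have hX' : HasDerivAt (deriv x) (lam ^ 2 * x t) t := heqx t ▸ (hx' t).hasDerivAt
    have hZ : HasDerivAt z (deriv z t) t := (hz t).hasDerivAt
    have hZ' : HasDerivAt (deriv z) (lam ^ 2 * (z t + c₁)) t := heqz t ▸ (hz' t).hasDerivAt
    have H := ((hZ.mul hX').sub (hX.mul hZ')).add (hX'.const_mul c₁)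
    convert H using 1
    · rfl
    · rfl
    · rfl
    ring
end

section
/- Let λ ≠ 0 and k₁, k₂ ∈ ℝ. Let x, y, z : ℝ → ℝ be twice differentiable with x(t) ≠ 0 and y(t) ≠ 0 for all t, satisfying ẍ = λ²x + 2k₁/x³, ÿ = λ²y + 2k₂/y³, z̈ = λ²z (equations of motion for V = -(λ²/2)(x²+y²+z²) + k₁/x² + k₂/y²). Then I₄(t) = e^(λt)[ (zẋ - xż)(ẋ - λx) + 2k₁z/x² ] and I₅(t) = e^(λt)[ (yż - zẏ)(ẏ - λy) - 2k₂z/y² ] are constant in t. -/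
lemma const_of_aux (lam k : ℝ) (x z : ℝ → ℝ)
    (hx : Differentiable ℝ x) (hx' : Differentiable ℝ (deriv x))
    (hz : Differentiable ℝ z) (hz' : Differentiable ℝ (deriv z))
    (hx0 : ∀ t, x t ≠ 0)
    (heqx : ∀ t, deriv (deriv x) t = lam^2 * x t + 2 * k / (x t)^3)
    (heqz : ∀ t, deriv (deriv z) t = lam^2 * z t) :
    ∀ s t : ℝ,
      Real.exp (lam * s) * ((z s * deriv x s - x s * deriv z s) * (deriv x s - lam * x s)
        + 2 * k * z s / (x s)^2)
      = Real.exp (lam * t) * ((z t * deriv x t - x t * deriv z t) * (deriv x t - lam * x t)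
        + 2 * k * z t / (x t)^2) := by
  have key : ∀ t, HasDerivAt (fun t => Real.exp (lam * t) *
      ((z t * deriv x t - x t * deriv z t) * (deriv x t - lam * x t)
        + 2 * k * z t / (x t)^2)) 0 t := by
    intro t
    have hX : HasDerivAt x (deriv x t) t := (hx t).hasDerivAt
    have hZ : HasDerivAt z (deriv z t) t := (hz t).hasDerivAt
    have hX' : HasDerivAt (deriv x) (lam^2 * x t + 2 * k / (x t)^3) t := by
      have h := (hx' t).hasDerivAt; rwa [heqx t] at h
    have hZ' : HasDerivAt (deriv z) (lam^2 * z t) t := by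
      have h := (hz' t).hasDerivAt; rwa [heqz t] at h
    have he : HasDerivAt (fun t => Real.exp (lam * t)) (Real.exp (lam * t) * lam) t := by
      simpa [Function.comp_def] using (Real.hasDerivAt_exp (lam * t)).comp t ((hasDerivAt_id t).const_mul lam)
    have hA : HasDerivAt (fun t => z t * deriv x t - x t * deriv z t)
        (deriv z t * deriv x t + z t * (lam^2 * x t + 2 * k / (x t)^3)
          - (deriv x t * deriv z t + x t * (lam^2 * z t))) t :=
      (hZ.mul hX').sub (hX.mul hZ')
    have hB : HasDerivAt (fun t => deriv x t - lam * x t)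
        ((lam^2 * x t + 2 * k / (x t)^3) - lam * deriv x t) t :=
      hX'.sub (hX.const_mul lam)
    have hnum : HasDerivAt (fun t => 2 * k * z t) (2 * k * deriv z t) t := hZ.const_mul (2 * k)
    have hden : HasDerivAt (fun t => (x t)^2) (2 * (x t)^1 * deriv x t) t := hX.pow 2
    have hC : HasDerivAt (fun t => 2 * k * z t / (x t)^2)
        ((2 * k * deriv z t * (x t)^2 - 2 * k * z t * (2 * (x t)^1 * deriv x t)) / ((x t)^2)^2) t :=
      hnum.div hden (pow_ne_zero 2 (hx0 t))
    have hG := (hA.mul hB).add hC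
    have hF := he.mul hG
    refine hF.congr_deriv ?_
    simp only [Pi.mul_apply, Pi.add_apply]
    have hx0t := hx0 t
    field_simp
    ring
  have hd : Differentiable ℝ (fun t => Real.exp (lam * t) *
      ((z t * deriv x t - x t * deriv z t) * (deriv x t - lam * x t)
        + 2 * k * z t / (x t)^2)) := fun t => (key t).differentiableAt
  intro s t
  exact is_const_of_deriv_eq_zero hd (fun t => (key t).deriv) s t

theorem stmt_18 (lam k₁ k₂ : ℝ) (hlam : lam ≠ 0) (x y z : ℝ → ℝ)
    (hx : Differentiable ℝ x) (hx' : Differentiable ℝ (deriv x))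
    (hy : Differentiable ℝ y) (hy' : Differentiable ℝ (deriv y))
    (hz : Differentiable ℝ z) (hz' : Differentiable ℝ (deriv z))
    (hx0 : ∀ t, x t ≠ 0) (hy0 : ∀ t, y t ≠ 0)
    (heqx : ∀ t, deriv (deriv x) t = lam^2 * x t + 2 * k₁ / (x t)^3)
    (heqy : ∀ t, deriv (deriv y) t = lam^2 * y t + 2 * k₂ / (y t)^3)
    (heqz : ∀ t, deriv (deriv z) t = lam^2 * z t) :
    (∀ s t : ℝ,
      Real.exp (lam * s) * ((z s * deriv x s - x s * deriv z s) * (deriv x s - lam * x s)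
        + 2 * k₁ * z s / (x s)^2)
      = Real.exp (lam * t) * ((z t * deriv x t - x t * deriv z t) * (deriv x t - lam * x t)
        + 2 * k₁ * z t / (x t)^2)) ∧
    (∀ s t : ℝ,
      Real.exp (lam * s) * ((y s * deriv z s - z s * deriv y s) * (deriv y s - lam * y s)
        - 2 * k₂ * z s / (y s)^2)
      = Real.exp (lam * t) * ((y t * deriv z t - z t * deriv y t) * (deriv y t - lam * y t)
        - 2 * k₂ * z t / (y t)^2)) := by
  constructor
  · exact const_of_aux lam k₁ x z hx hx' hz hz' hx0 heqx heqz
  · intro s t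
    have h := const_of_aux lam k₂ y z hy hy' hz hz' hy0 heqy heqz s t
    linear_combination -h
end

section
/- Let F : ℝ → ℝ be differentiable and c₁, c₂ ∈ ℝ. Let x, y, z : ℝ → ℝ be twice differentiable satisfying the equations of motion for the potential V(x,y,z) = G(r, x - c₁y - c₂z), where G : ℝ × ℝ → ℝ is differentiable and r = √(x²+y²+z²) > 0 along the motion. Then the quantity I = (yż - zẏ) - c₁(zẋ - xż) - c₂(xẏ - yẋ) is constant in t. -/
lemma fd_split (G : ℝ × ℝ → ℝ) (p : ℝ × ℝ) (a b : ℝ) :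
    fderiv ℝ G p (a, b) = a * fderiv ℝ G p (1, 0) + b * fderiv ℝ G p (0, 1) := by
  have h : (a, b) = a • ((1:ℝ), (0:ℝ)) + b • ((0:ℝ), (1:ℝ)) := by simp
  rw [h, map_add, map_smul, map_smul]
  simp [smul_eq_mul]

theorem stmt_19 (F : ℝ → ℝ) (hF : Differentiable ℝ F) (c₁ c₂ : ℝ)
    (G : ℝ × ℝ → ℝ) (hG : Differentiable ℝ G)
    (x y z : ℝ → ℝ)
    (hx : Differentiable ℝ x) (hx' : Differentiable ℝ (deriv x))
    (hy : Differentiable ℝ y) (hy' : Differentiable ℝ (deriv y))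
    (hz : Differentiable ℝ z) (hz' : Differentiable ℝ (deriv z))
    (r : ℝ → ℝ) (hr : ∀ t, r t = Real.sqrt ((x t)^2 + (y t)^2 + (z t)^2))
    (hr0 : ∀ t, 0 < r t)
    (heqx : ∀ t, deriv (deriv x) t =
      -( fderiv ℝ G (r t, x t - c₁ * y t - c₂ * z t) (x t / r t, 1) ))
    (heqy : ∀ t, deriv (deriv y) t =
      -( fderiv ℝ G (r t, x t - c₁ * y t - c₂ * z t) (y t / r t, -c₁) ))
    (heqz : ∀ t, deriv (deriv z) t =
      -( fderiv ℝ G (r t, x t - c₁ * y t - c₂ * z t) (z t / r t, -c₂) )) :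
    ∀ s t : ℝ,
      (y s * deriv z s - z s * deriv y s) - c₁ * (z s * deriv x s - x s * deriv z s)
        - c₂ * (x s * deriv y s - y s * deriv x s)
      = (y t * deriv z t - z t * deriv y t) - c₁ * (z t * deriv x t - x t * deriv z t)
        - c₂ * (x t * deriv y t - y t * deriv x t) := by
  set I : ℝ → ℝ := fun t =>
      (y t * deriv z t - z t * deriv y t) - c₁ * (z t * deriv x t - x t * deriv z t)
        - c₂ * (x t * deriv y t - y t * deriv x t) with hI
  have key : ∀ t : ℝ, HasDerivAt I 0 t := by
    intro t
    have Hx := (hx t).hasDerivAt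
    have Hy := (hy t).hasDerivAt
    have Hz := (hz t).hasDerivAt
    have Hx' := (hx' t).hasDerivAt
    have Hy' := (hy' t).hasDerivAt
    have Hz' := (hz' t).hasDerivAt
    have H : HasDerivAt I
        ((deriv y t * deriv z t + y t * deriv (deriv z) t
          - (deriv z t * deriv y t + z t * deriv (deriv y) t))
        - c₁ * (deriv z t * deriv x t + z t * deriv (deriv x) t
          - (deriv x t * deriv z t + x t * deriv (deriv z) t))
        - c₂ * (deriv x t * deriv y t + x t * deriv (deriv y) t
          - (deriv y t * deriv x t + y t * deriv (deriv x) t))) t := by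
      exact (((Hy.mul Hz').sub (Hz.mul Hy')).sub
        ((HasDerivAt.const_mul c₁ ((Hz.mul Hx').sub (Hx.mul Hz'))))).sub
        ((HasDerivAt.const_mul c₂ ((Hx.mul Hy').sub (Hy.mul Hx'))))
    convert H using 1
    rw [heqx t, heqy t, heqz t]
    set p := (r t, x t - c₁ * y t - c₂ * z t)
    rw [fd_split G p (x t / r t) 1, fd_split G p (y t / r t) (-c₁), fd_split G p (z t / r t) (-c₂)]
    ring
  intro s t
  have : ∀ u v : ℝ, I u = I v := by
    intro u v
    have hd : Differentiable ℝ I := fun u => (key u).differentiableAt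
    have := is_const_of_deriv_eq_zero hd (fun u => (key u).deriv) u v
    exact this
  exact this s t
end
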